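/- arXiv:2601.09357 — 2 statements merged into one kernel-verified Lean document; each statement's English description precedes it below -/
import Mathlib

section
/- Exponential generating function for set partitions into lists: for n ≥ 0 let L_n = Σ_π Π_{B ∈ π} |B|!, the sum over all set partitions π of {1,…,n} (so L_n counts the set partitions of {1,…,n} into nonempty ordered lists; L_0 = 1). Then in ℚ[[X]] one has Σ_{n≥0} L_n X^n/n! = exp( Σ_{n≥1} X^n ), i.e. exp applied to the power series X/(1−X), which has zero constant term. -/
/-- A set partition of `{1,…,n}` (modelled as `Fin n`). -/
def IsSetPartition (n : ℕ) (π : Finset (Finset (Fin n))) : Prop :=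
  (∀ B ∈ π, B.Nonempty) ∧
  (∀ B ∈ π, ∀ C ∈ π, B ≠ C → B ∩ C = ∅) ∧
  π.sup id = Finset.univ

open scoped Classical in
/-- The set of all set partitions of `{1,…,n}`. -/
noncomputable def setPartitions (n : ℕ) : Finset (Finset (Finset (Fin n))) :=
  Finset.univ.filter (IsSetPartition n)

/-- `L_n = Σ_π Π_{B ∈ π} |B|!`, the number of set partitions of `{1,…,n}`
into nonempty ordered lists. -/
noncomputable def lah (n : ℕ) : ℚ :=
  ∑ π ∈ setPartitions n, ∏ B ∈ π, (B.card.factorial : ℚ)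

/-- The exponential `Σ_{k≥0} F^k / k!` of a power series `F` with zero constant
term, computed coefficientwise. -/
noncomputable def expComp (F : PowerSeries ℚ) : PowerSeries ℚ :=
  PowerSeries.mk fun n => ∑ k ∈ Finset.range (n + 1),
    (k.factorial : ℚ)⁻¹ * PowerSeries.coeff (R := ℚ) n (F ^ k)

/-!
Splitting off the block that contains a fixed point gives
`L (n + 1) = ∑ j, (n choose j) (j + 1)! L (n - j)`, i.e. `(n + 1) u (n + 1) = ∑ j, (j + 1) u (n - j)`
for `u n = L n / n!`. On the other side `E = exp F` satisfies `E' = E F'`, and for `F = X / (1 - X)`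
the coefficients of `F'` are `n + 1`; so the coefficients of `E` obey the same recursion.
-/

open Finset PowerSeries
open scoped Nat

section SetPartitionsOn

variable {α : Type*} [DecidableEq α]

def IsSetPartitionOn (s : Finset α) (π : Finset (Finset α)) : Prop :=
  (∀ B ∈ π, B.Nonempty) ∧
  (∀ B ∈ π, ∀ C ∈ π, B ≠ C → B ∩ C = ∅) ∧
  π.sup id = s

open scoped Classical in
noncomputable def setPartitionsOn (s : Finset α) : Finset (Finset (Finset α)) :=
  s.powerset.powerset.filter (IsSetPartitionOn s)

noncomputable def lahOn (s : Finset α) : ℚ :=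
  ∑ π ∈ setPartitionsOn s, ∏ B ∈ π, ((#B)! : ℚ)

namespace IsSetPartitionOn

variable {s t B C : Finset α} {π ρ : Finset (Finset α)}

theorem subset (h : IsSetPartitionOn s π) (hB : B ∈ π) : B ⊆ s :=
  h.2.2 ▸ le_sup (f := id) hB

theorem eq_of_mem_of_mem {a : α} (h : IsSetPartitionOn s π) (hB : B ∈ π) (hC : C ∈ π)
    (haB : a ∈ B) (haC : a ∈ C) : B = C := by
  by_contra hBC
  simpa [h.2.1 B hB C hC hBC] using mem_inter.2 ⟨haB, haC⟩

theorem insert (h : IsSetPartitionOn t ρ) (hB : B.Nonempty) (hBt : Disjoint B t) :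
    IsSetPartitionOn (B ∪ t) (Insert.insert B ρ) := by
  have hdisj : ∀ C ∈ ρ, B ∩ C = ∅ := fun C hC =>
    disjoint_iff_inter_eq_empty.1 (hBt.mono_right (h.subset hC))
  refine ⟨?_, ?_, by rw [sup_insert, h.2.2]; rfl⟩
  · simpa [hB] using h.1
  · simp only [mem_insert]
    rintro C (rfl | hC) D (rfl | hD) hCD
    · exact absurd rfl hCD
    · exact hdisj D hD
    · rw [inter_comm]; exact hdisj C hC
    · exact h.2.1 C hC D hD hCD

theorem erase (h : IsSetPartitionOn s π) (hB : B ∈ π) :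
    IsSetPartitionOn (s \ B) (π.erase B) := by
  refine ⟨fun C hC => h.1 C (mem_of_mem_erase hC),
    fun C hC D hD => h.2.1 C (mem_of_mem_erase hC) D (mem_of_mem_erase hD), ?_⟩
  ext x
  simp only [mem_sup, mem_erase, id_eq, mem_sdiff]
  constructor
  · rintro ⟨C, ⟨hCB, hC⟩, hxC⟩
    exact ⟨h.subset hC hxC, fun hxB => hCB (h.eq_of_mem_of_mem hC hB hxC hxB)⟩
  · rintro ⟨hxs, hxB⟩
    obtain ⟨C, hC, hxC⟩ := mem_sup.1 (h.2.2 ▸ hxs : x ∈ π.sup id)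
    exact ⟨C, ⟨fun hCB => hxB (hCB ▸ hxC), hC⟩, hxC⟩

end IsSetPartitionOn

theorem mem_setPartitionsOn {s : Finset α} {π : Finset (Finset α)} :
    π ∈ setPartitionsOn s ↔ IsSetPartitionOn s π := by
  classical
  simp only [setPartitionsOn, mem_filter, mem_powerset, and_iff_right_iff_imp]
  exact fun h B hB => mem_powerset.2 (h.subset hB)

theorem setPartitionsOn_empty : setPartitionsOn (∅ : Finset α) = {∅} := by
  ext π
  rw [mem_setPartitionsOn, mem_singleton]
  refine ⟨fun h => eq_empty_of_forall_notMem fun B hB => ?_, ?_⟩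
  · obtain ⟨x, hx⟩ := h.1 B hB
    exact notMem_empty x (h.subset hB hx)
  · rintro rfl
    exact ⟨by simp, by simp, rfl⟩

theorem lahOn_empty : lahOn (∅ : Finset α) = 1 := by
  simp [lahOn, setPartitionsOn_empty]

end SetPartitionsOn

section LahOnInsert

variable {α : Type*} [DecidableEq α] {a : α} {s T : Finset α} {ρ : Finset (Finset α)}

theorem isSetPartitionOn_insert_insert (ha : a ∉ s) (hT : T ⊆ s)
    (hρ : IsSetPartitionOn (s \ T) ρ) :
    IsSetPartitionOn (insert a s) (insert (insert a T) ρ) := by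
  have hdisj : Disjoint (insert a T) (s \ T) :=
    disjoint_insert_left.2 ⟨fun h => ha (mem_sdiff.1 h).1, disjoint_sdiff⟩
  simpa [insert_union, union_sdiff_of_subset hT] using
    hρ.insert (insert_nonempty a T) hdisj

theorem insert_notMem_of_isSetPartitionOn_sdiff (ha : a ∉ s)
    (hρ : IsSetPartitionOn (s \ T) ρ) : insert a T ∉ ρ :=
  fun h => ha (sdiff_subset (hρ.subset h (mem_insert_self a T)))

/- A partition of `insert a s` is its block `insert a T` containing `a`, for some `T ⊆ s`,
together with a partition of `s \ T`. -/
theorem lahOn_insert (ha : a ∉ s) :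
    lahOn (insert a s) = ∑ T ∈ s.powerset, ((#T + 1)! : ℚ) * lahOn (s \ T) := by
  simp only [lahOn, mul_sum]
  rw [sum_sigma', eq_comm]
  refine sum_bij (fun p _ => insert (insert a p.1) p.2) ?_ ?_ ?_ ?_
  · rintro ⟨T, ρ⟩ hp
    simp only [mem_sigma, mem_powerset, mem_setPartitionsOn] at hp ⊢
    exact isSetPartitionOn_insert_insert ha hp.1 hp.2
  · rintro ⟨T, ρ⟩ hp ⟨T', ρ'⟩ hp' hπ
    simp only [mem_sigma, mem_powerset, mem_setPartitionsOn] at hp hp' hπ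
    have hblock : insert a T = insert a T' :=
      (isSetPartitionOn_insert_insert ha hp.1 hp.2).eq_of_mem_of_mem (mem_insert_self _ _)
        (hπ ▸ mem_insert_self _ _) (mem_insert_self a T) (mem_insert_self a T')
    obtain rfl : T = T' := by
      rw [← erase_insert fun h => ha (hp.1 h), hblock, erase_insert fun h => ha (hp'.1 h)]
    have hρ := congrArg (·.erase (insert a T)) hπ
    simp only [erase_insert (insert_notMem_of_isSetPartitionOn_sdiff ha hp.2),
      erase_insert (insert_notMem_of_isSetPartitionOn_sdiff ha hp'.2)] at hρ
    rw [hρ]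
  · intro π hπ
    rw [mem_setPartitionsOn] at hπ
    obtain ⟨B, hB, haB : a ∈ B⟩ := mem_sup.1 (hπ.2.2 ▸ mem_insert_self a s : a ∈ π.sup id)
    have hsdiff : insert a s \ B = s \ B.erase a := by
      ext x
      by_cases hx : x = a <;> simp_all
    refine ⟨⟨B.erase a, π.erase B⟩, ?_, ?_⟩
    · simp only [mem_sigma, mem_powerset, mem_setPartitionsOn]
      refine ⟨fun x hx => ?_, hsdiff ▸ hπ.erase hB⟩
      simpa [ne_of_mem_erase hx] using hπ.subset hB (mem_of_mem_erase hx)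
    · rw [insert_erase haB, insert_erase hB]
  · rintro ⟨T, ρ⟩ hp
    simp only [mem_sigma, mem_powerset, mem_setPartitionsOn] at hp
    rw [prod_insert (insert_notMem_of_isSetPartitionOn_sdiff ha hp.2),
      card_insert_of_notMem fun h => ha (hp.1 h)]

end LahOnInsert

theorem lahOn_eq_factorial_mul {α : Type*} [DecidableEq α] {u : ℕ → ℚ} (h0 : u 0 = 1)
    (hsucc : ∀ n : ℕ, (n + 1 : ℚ) * u (n + 1) = ∑ p ∈ antidiagonal n, (p.1 + 1 : ℚ) * u p.2)
    (s : Finset α) : lahOn s = (#s)! * u #s := by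
  induction s using Finset.strongInduction with
  | H s ih =>
  obtain rfl | ⟨a, has⟩ := s.eq_empty_or_nonempty
  · simp [lahOn_empty, h0]
  set t := s.erase a
  set n := #t
  have hst : s = insert a t := (insert_erase has).symm
  have hterm : ∀ T ∈ t.powerset, ((#T + 1)! : ℚ) * lahOn (t \ T) =
      (#T + 1)! * (n - #T)! * u (n - #T) := by
    intro T hT
    rw [ih _ (sdiff_subset.trans_ssubset (erase_ssubset has)),
      card_sdiff_of_subset (mem_powerset.1 hT), mul_assoc]
  have hchoose : ∀ j ∈ range (n + 1),
      n.choose j • (((j + 1)! : ℚ) * (n - j)! * u (n - j)) = n ! * ((j + 1) * u (n - j)) := by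
    intro j hj
    have hfac : (n.choose j : ℚ) * j ! * (n - j)! = n ! := by
      exact_mod_cast Nat.choose_mul_factorial_mul_factorial (Nat.lt_succ_iff.1 (mem_range.1 hj))
    rw [nsmul_eq_mul, Nat.factorial_succ, Nat.cast_mul]
    push_cast
    linear_combination ((j : ℚ) + 1) * u (n - j) * hfac
  calc lahOn s = ∑ T ∈ t.powerset, ((#T + 1)! : ℚ) * lahOn (t \ T) := by
        rw [hst, lahOn_insert (notMem_erase a s)]
    _ = ∑ j ∈ range (n + 1), n.choose j • (((j + 1)! : ℚ) * (n - j)! * u (n - j)) := by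
        rw [sum_congr rfl hterm, sum_powerset_apply_card fun j => ((j + 1)! : ℚ) * (n - j)! * u (n - j)]
    _ = n ! * ((n + 1) * u (n + 1)) := by
        rw [sum_congr rfl hchoose, ← mul_sum, hsucc, Nat.sum_antidiagonal_eq_sum_range_succ_mk]
    _ = (#s)! * u #s := by
        rw [hst, card_insert_of_notMem (notMem_erase a s), Nat.factorial_succ]
        push_cast
        ring

theorem lah_eq_lahOn_univ (n : ℕ) : lah n = lahOn (univ : Finset (Fin n)) := by
  have hpart : setPartitions n = setPartitionsOn univ := by
    ext π
    simp [setPartitions, mem_setPartitionsOn, IsSetPartition, IsSetPartitionOn]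
  rw [lah, lahOn, hpart]

namespace PowerSeries

theorem coeff_pow_eq_zero_of_lt {R : Type*} [Semiring R] {F : R⟦X⟧}
    (hF : constantCoeff F = 0) {n k : ℕ} (h : n < k) : coeff n (F ^ k) = 0 :=
  coeff_of_lt_order n ((Nat.cast_lt.2 h).trans_le (le_order_pow_of_constantCoeff_eq_zero k hF))

noncomputable def expPartialSum (F : ℚ⟦X⟧) (N : ℕ) : ℚ⟦X⟧ :=
  ∑ k ∈ range N, (k ! : ℚ)⁻¹ • F ^ k

theorem coeff_zero_expComp (F : ℚ⟦X⟧) : coeff 0 (expComp F) = 1 := by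
  simp [expComp]

variable {F : ℚ⟦X⟧}

theorem coeff_expComp_eq_coeff_expPartialSum (hF : constantCoeff F = 0) {n N : ℕ} (hn : n < N) :
    coeff n (expComp F) = coeff n (expPartialSum F N) := by
  simp only [expComp, expPartialSum, coeff_mk, map_sum, coeff_smul, smul_eq_mul]
  refine sum_subset (range_subset_range.2 hn) fun k _ hk => ?_
  rw [coeff_pow_eq_zero_of_lt hF (by simpa using hk), mul_zero]

theorem derivative_expPartialSum_succ (N : ℕ) :
    d⁄dX ℚ (expPartialSum F (N + 1)) = expPartialSum F N * d⁄dX ℚ F := by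
  rw [expPartialSum, expPartialSum, sum_range_succ', sum_mul, map_add, map_sum]
  simp only [Nat.factorial_zero, Nat.cast_one, inv_one, pow_zero, one_smul, derivative_one,
    add_zero]
  refine sum_congr rfl fun k _ => ?_
  rw [Derivation.map_smul, Derivation.leibniz_pow, Nat.add_sub_cancel, smul_eq_mul, smul_mul_assoc,
    ← Nat.cast_smul_eq_nsmul ℚ, smul_smul, Nat.factorial_succ, Nat.cast_mul, Nat.cast_succ, mul_inv,
    mul_right_comm, inv_mul_cancel₀ k.cast_add_one_ne_zero, one_mul]

theorem derivative_expComp (hF : constantCoeff F = 0) :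
    d⁄dX ℚ (expComp F) = expComp F * d⁄dX ℚ F := by
  ext n
  rw [coeff_derivative, coeff_expComp_eq_coeff_expPartialSum hF (Nat.lt_succ_self (n + 1)),
    ← coeff_derivative, derivative_expPartialSum_succ, coeff_mul, coeff_mul]
  refine sum_congr rfl fun p hp => ?_
  rw [coeff_expComp_eq_coeff_expPartialSum hF (Nat.lt_succ_of_le (HasAntidiagonal.antidiagonal.fst_le hp))]

end PowerSeries

/-- EGF for set partitions into lists:
`Σ_{n≥0} L_n X^n/n! = exp(Σ_{n≥1} X^n)`. -/
theorem lists_egf :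
    PowerSeries.mk (fun n => lah n / n.factorial) =
      expComp (PowerSeries.mk fun n => if n = 0 then 0 else 1) := by
  set F : ℚ⟦X⟧ := mk fun n => if n = 0 then 0 else 1
  have hF : constantCoeff F = 0 := by simp [F, ← coeff_zero_eq_constantCoeff_apply]
  have hF' : d⁄dX ℚ F = mk fun n => (n + 1 : ℚ) := by
    ext n
    simp [F, coeff_derivative]
  have hrec : ∀ n : ℕ, (n + 1 : ℚ) * coeff (n + 1) (expComp F) =
      ∑ p ∈ antidiagonal n, (p.1 + 1 : ℚ) * coeff p.2 (expComp F) := by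
    intro n
    rw [mul_comm, ← coeff_derivative, derivative_expComp hF, mul_comm, coeff_mul, hF']
    simp only [coeff_mk]
  ext n
  rw [coeff_mk, lah_eq_lahOn_univ, lahOn_eq_factorial_mul (u := fun n => coeff n (expComp F)) (coeff_zero_expComp F) hrec, card_univ,
    Fintype.card_fin, mul_div_cancel_left₀ _ (Nat.cast_ne_zero.2 n.factorial_ne_zero)]
end

section
/- Standardization is compatible with shifted unions: let π be a set partition of {1,…,n} and π' a set partition of {1,…,n'}; let S be any subset of the blocks of π and S' any subset of the blocks of π'. Let S'[n] denote the collection of blocks of S' with every element increased by n. Then std(S ∪ S'[n]) = std(S) ⊎ std(S'), where for a finite collection T of pairwise disjoint nonempty finite sets of positive integers, std(T) is the set partition of {1,…,m} (m the cardinality of the union of T) obtained by applying to each block the unique increasing bijection from the union of the blocks of T onto {1,…,m}. -/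
/-- A set partition of `{1,…,n}` (as a finite collection of pairwise disjoint
nonempty finsets of positive integers whose union is `{1,…,n}`). -/
def IsPartitionOf (n : ℕ) (π : Finset (Finset ℕ)) : Prop :=
  (∀ B ∈ π, B.Nonempty) ∧
  (∀ B ∈ π, ∀ C ∈ π, B ≠ C → B ∩ C = ∅) ∧
  π.sup id = Finset.Icc 1 n

/-- The blocks of `π` with every element increased by `n`. -/
def shiftBlocks (n : ℕ) (π : Finset (Finset ℕ)) : Finset (Finset ℕ) :=
  π.image fun B => B.image (· + n)

/-- The shifted union `π ⊎ π'`, where `π` is a set partition of `{1,…,n}`. -/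
def shiftedUnion (n : ℕ) (π π' : Finset (Finset ℕ)) : Finset (Finset ℕ) :=
  π ∪ shiftBlocks n π'

/-- The unique increasing bijection from a finset `F ⊆ ℕ` onto `{1,…,|F|}`:
`x ∈ F` is sent to the number of elements of `F` that are `≤ x`. -/
def stdMap (F : Finset ℕ) (x : ℕ) : ℕ := (F.filter (· ≤ x)).card

/-- Standardization: apply to each block of `T` the unique increasing bijection
from the union of the blocks of `T` onto `{1,…,m}`, where `m` is the
cardinality of that union. -/
def std (T : Finset (Finset ℕ)) : Finset (Finset ℕ) :=
  T.image fun B => B.image (stdMap (T.sup id))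

/-!
Let `U` and `U'` be the unions of the blocks of `S` and `S'`. Standardization only depends on
the relative order of the elements of `U ∪ U'[n]`, and every element of `U ⊆ {1,…,n}` lies
below every element of `U'[n] ⊆ {n+1,…}`. So the rank of `x ∈ U` in the union is its rank in
`U`, while the rank of `y + n` with `y ∈ U'` is `|U|` plus the rank of `y` in `U'`.
-/

open Finset

lemma sup_id_shiftBlocks (n : ℕ) (T : Finset (Finset ℕ)) :
    (shiftBlocks n T).sup id = (T.sup id).image (· + n) := by
  rw [shiftBlocks, sup_image, Function.id_comp, sup_eq_biUnion, sup_eq_biUnion, biUnion_image]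
  rfl

lemma IsPartitionOf.mem_Icc_of_mem_sup {n : ℕ} {π S : Finset (Finset ℕ)} (hπ : IsPartitionOf n π)
    (hS : S ⊆ π) {x : ℕ} (hx : x ∈ S.sup id) : x ∈ Icc 1 n := by
  rw [← hπ.2.2]
  exact sup_mono (f := id) hS hx

lemma stdMap_union_of_lt {A B : Finset ℕ} {x : ℕ} (h : ∀ b ∈ B, x < b) :
    stdMap (A ∪ B) x = stdMap A x := by
  rw [stdMap, stdMap, filter_union, filter_false_of_mem fun b hb => not_le.2 (h b hb),
    union_empty]

lemma stdMap_union_of_le {A B : Finset ℕ} {x : ℕ} (hAB : Disjoint A B) (h : ∀ a ∈ A, a ≤ x) :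
    stdMap (A ∪ B) x = #A + stdMap B x := by
  rw [stdMap, stdMap, filter_union, filter_true_of_mem h,
    card_union_of_disjoint (hAB.mono_right (filter_subset _ _))]

lemma stdMap_image_add (B : Finset ℕ) (n y : ℕ) :
    stdMap (B.image (· + n)) (y + n) = stdMap B y := by
  simp only [stdMap, filter_image, add_le_add_iff_right,
    card_image_of_injective _ (add_left_injective n)]

theorem std_union_shiftBlocks {n : ℕ} {T T' : Finset (Finset ℕ)}
    (hT : ∀ x ∈ T.sup id, x ≤ n) (hT' : ∀ y ∈ T'.sup id, 0 < y) :
    std (T ∪ shiftBlocks n T') = shiftedUnion #(T.sup id) (std T) (std T') := by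
  set U := T.sup id
  set U' := T'.sup id
  have hsup : (T ∪ shiftBlocks n T').sup id = U ∪ U'.image (· + n) := by
    rw [sup_union, sup_id_shiftBlocks]
    rfl
  have hlt : ∀ x ∈ U, ∀ z ∈ U'.image (· + n), x < z := by
    simp only [mem_image]
    rintro x hx _ ⟨y, hy, rfl⟩
    linarith [hT x hx, hT' y hy]
  have hdisj : Disjoint U (U'.image (· + n)) :=
    disjoint_left.2 fun x hx hx' => lt_irrefl x (hlt x hx x hx')
  rw [std, hsup, std, std, shiftedUnion, shiftBlocks, shiftBlocks, image_union, image_image]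
  congr 1
  · refine image_congr fun B hB => image_congr fun x hx => ?_
    exact stdMap_union_of_lt (hlt x (le_sup (f := id) hB hx))
  · simp only [image_image, Function.comp_def]
    refine image_congr fun B hB => image_congr fun y hy => ?_
    have hy' : y + n ∈ U'.image (· + n) := mem_image_of_mem _ (le_sup (f := id) hB hy)
    rw [stdMap_union_of_le hdisj fun x hx => (hlt x hx _ hy').le, stdMap_image_add, add_comm]

/-- Standardization is compatible with shifted unions:
`std(S ∪ S'[n]) = std(S) ⊎ std(S')` for any subsets `S`, `S'` of the blocks of
set partitions `π` of `{1,…,n}` and `π'` of `{1,…,n'}`. -/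
theorem std_shiftedUnion (n n' : ℕ) (π π' : Finset (Finset ℕ))
    (hπ : IsPartitionOf n π) (hπ' : IsPartitionOf n' π')
    (S S' : Finset (Finset ℕ)) (hS : S ⊆ π) (hS' : S' ⊆ π') :
    std (S ∪ shiftBlocks n S') = shiftedUnion (S.sup id).card (std S) (std S') :=
  std_union_shiftBlocks (fun _ hx => (mem_Icc.1 (hπ.mem_Icc_of_mem_sup hS hx)).2)
    fun _ hy => (mem_Icc.1 (hπ'.mem_Icc_of_mem_sup hS' hy)).1
end
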